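/- If (X,E) is an expansive hyperbolic graph of bounded degree (sup_{x∈X} deg(x) < ∞), then its hyperbolic boundary (∂X, θ_a) is a doubling metric space. -/

import Mathlib

open SimpleGraph Metric
open scoped ENNReal ENat

noncomputable section

/-- A locally finite connected graph with a distinguished root. -/
structure RootedGraph (X : Type*) where
  G : SimpleGraph X
  root : X
  conn : G.Connected
  locFin : ∀ x : X, {y | G.Adj x y}.Finite

namespace RootedGraph

variable {X : Type*} (R : RootedGraph X)

/-- The level `|x| = d(ϑ,x)` of a vertex. -/
def level (x : X) : ℕ := R.G.dist R.root x

/-- The horizontal subgraph: edges joining vertices of equal level. -/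
def Gh : SimpleGraph X where
  Adj x y := R.G.Adj x y ∧ R.level x = R.level y
  symm := ⟨fun _ _ h => ⟨h.1.symm, h.2.symm⟩⟩
  loopless := ⟨fun _ h => R.G.irrefl h.1⟩

/-- The horizontal distance `d_h`, valued in `ℕ∞`. -/
def dh (x y : X) : ℕ∞ := R.Gh.edist x y

/-- The `m`-th descendant set `J_m(x)`: vertices `y` with `|y| = |x| + m` lying
below `x` (i.e. `x` lies on a geodesic from the root to `y`). -/
def J (m : ℕ) (x : X) : Set X :=
  {y | R.level y = R.level x + m ∧ R.G.dist x y = m}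

/-- `(m,k)`-departing property. -/
def Departing (m k : ℕ) : Prop :=
  ∀ x y : X, R.level x = R.level y → (k : ℕ∞) < R.dh x y →
    ∀ u ∈ R.J m x, ∀ v ∈ R.J m y, ((2 * k : ℕ) : ℕ∞) < R.dh u v

/-- Expansive property. -/
def Expansive : Prop :=
  ∀ x y : X, R.level x = R.level y → (1 : ℕ∞) < R.dh x y →
    ∀ u ∈ R.J 1 x, ∀ v ∈ R.J 1 y, (1 : ℕ∞) < R.dh u v

/-- The Gromov product `(x|y)` with base point the root. -/
def gp (x y : X) : ℝ := ((R.level x : ℝ) + R.level y - R.G.dist x y) / 2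

/-- Gromov hyperbolicity with respect to the root base point. -/
def Hyperbolic : Prop :=
  ∃ δ : ℝ, 0 ≤ δ ∧ ∀ x y z : X, min (R.gp x z) (R.gp z y) - δ ≤ R.gp x y

/-- A geodesic ray from the root. -/
def IsRay (f : ℕ → X) : Prop := f 0 = R.root ∧ ∀ i, f (i + 1) ∈ R.J 1 (f i)

/-- The Gromov product of two rays: the (increasing) limit of `(x_i|y_i)`. -/
def gpRay (f g : ℕ → X) : ℝ≥0∞ := ⨆ i, ENNReal.ofReal (R.gp (f i) (g i))

/-- `|x ∨ y|_k = sup{ i : d_h(x_i,y_i) ≤ k }`. -/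
def joinK (k : ℕ) (f g : ℕ → X) : ℝ≥0∞ :=
  ⨆ (i : ℕ) (_ : R.dh (f i) (g i) ≤ (k : ℕ∞)), (i : ℝ≥0∞)

/-- The Gromov product on a model `B` of the hyperbolic boundary, defined as the
supremum over pairs of converging rays. -/
def gpB {B : Type*} (lim : (ℕ → X) → B) (ξ η : B) : ℝ≥0∞ :=
  ⨆ (f : ℕ → X) (g : ℕ → X)
    (_ : R.IsRay f ∧ R.IsRay g ∧ lim f = ξ ∧ lim g = η), R.gpRay f g

/-- `B` together with `lim` is a model of the hyperbolic boundary: every point is the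
limit of a ray, and two rays have the same limit iff they are equivalent. -/
def BoundaryOf {B : Type*} (lim : (ℕ → X) → B) : Prop :=
  (∀ ξ : B, ∃ f, R.IsRay f ∧ lim f = ξ) ∧
    ∀ f g, R.IsRay f → R.IsRay g → (lim f = lim g ↔ R.gpRay f g = ⊤)

/-- The metric on the boundary model is a Gromov metric:
`θ_a(ξ,η) ≍ e^{-a(ξ|η)}`. -/
def GromovLike {B : Type*} [MetricSpace B] (lim : (ℕ → X) → B) (a c₁ c₂ : ℝ) : Prop :=
  ∀ ξ η : B, ξ ≠ η →
    c₁ * Real.exp (-a * (R.gpB lim ξ η).toReal) ≤ dist ξ η ∧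
      dist ξ η ≤ c₂ * Real.exp (-a * (R.gpB lim ξ η).toReal)

/-- The boundary cell `J_∂(x)`: boundary points reachable by rays through `x`. -/
def cell {B : Type*} (lim : (ℕ → X) → B) (x : X) : Set B :=
  {ξ | ∃ f, R.IsRay f ∧ f (R.level x) = x ∧ lim f = ξ}

/-- The `k`-shadow `J^k_∂(x)`. -/
def shadow {B : Type*} (lim : (ℕ → X) → B) (k : ℕ) (x : X) : Set B :=
  ⋃ y ∈ {y | R.level y = R.level x ∧ R.dh x y ≤ (k : ℕ∞)}, R.cell lim y

/-- Bounded degree. -/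
def BddDeg : Prop := ∃ D : ℕ, ∀ x : X, Set.ncard {y | R.G.Adj x y} ≤ D

/-- A vertical rooted graph: all edges join adjacent levels. -/
def Vertical : Prop :=
  ∀ x y : X, R.G.Adj x y → R.level x = R.level y + 1 ∨ R.level y = R.level x + 1

/-- An index map on `(X,E_v)` over `M`. -/
def IsIndexMap {M : Type*} [MetricSpace M] (Φ : X → Set M) : Prop :=
  (∀ x, IsCompact (Φ x)) ∧ (∀ x, (Φ x).Nonempty) ∧
    (∀ x y, y ∈ R.J 1 x → Φ y ⊆ Φ x) ∧
    (∀ f, R.IsRay f → ∃ p, (⋂ i, Φ (f i)) = {p})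

/-- The attractor of an index map. -/
def attractor {M : Type*} [MetricSpace M] (Φ : X → Set M) : Set M :=
  ⋂ n : ℕ, ⋃ x ∈ {x | R.level x = n}, Φ x

/-- Exponential type-(b): `diam Φ(x) ≤ δ₀ e^{-b|x|}`. -/
def ExpType {M : Type*} [MetricSpace M] (Φ : X → Set M) (b δ₀ : ℝ) : Prop :=
  ∀ x, EMetric.diam (Φ x) ≤ ENNReal.ofReal (δ₀ * Real.exp (-b * R.level x))

/-- Condition `(S_b)`. -/
def CondS {M : Type*} [MetricSpace M] (Φ : X → Set M) (b : ℝ) : Prop :=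
  ∀ c : ℝ, 0 < c → ∃ ℓ : ℕ, ∀ (n : ℕ) (F : Set M),
    EMetric.diam F < ENNReal.ofReal (c * Real.exp (-b * n)) →
      Set.ncard {x | R.level x = n ∧ ((Φ x ∩ R.attractor Φ) ∩ F).Nonempty} ≤ ℓ

end RootedGraph

/-- Distance between two subsets of a metric space. -/
def setDist {M : Type*} [MetricSpace M] (s t : Set M) : ℝ :=
  sInf ((fun p : M × M => dist p.1 p.2) '' s ×ˢ t)

/-- The AI_b-graph on `X` associated to an index map `Φ`:
same root, same vertical edges, and horizontal edges between distinct equal-level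
vertices whose index sets are `γe^{-bn}`-close. -/
def RootedGraph.IsAIb {X M : Type*} [MetricSpace M] (R R' : RootedGraph X)
    (Φ : X → Set M) (b γ : ℝ) : Prop :=
  R'.root = R.root ∧ ∀ x y : X, R'.G.Adj x y ↔
    (R.G.Adj x y ∨ (R.level x = R.level y ∧ x ≠ y ∧
      setDist (Φ x) (Φ y) ≤ γ * Real.exp (-b * R.level x)))

/-- The AI_∞-graph on `X` associated to an index map `Φ`. -/
def RootedGraph.IsAIinf {X M : Type*} [MetricSpace M] (R R' : RootedGraph X)
    (Φ : X → Set M) : Prop :=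
  R'.root = R.root ∧ ∀ x y : X, R'.G.Adj x y ↔
    (R.G.Adj x y ∨ (R.level x = R.level y ∧ x ≠ y ∧ (Φ x ∩ Φ y).Nonempty))

end

/-!
A ball of radius `r = c₁ e^{-at}` about `ξ` only contains points `η` with `(ξ|η) > t`. Fix a
ray `f` to `ξ` and a level `n` with `t + K < n ≤ t + K + 1`, where `2c₂ ≤ c₁ e^{aK}`. By
`δ`-hyperbolicity every ray `g` to such an `η` satisfies `(f n | g n) ≥ t - 4δ`, so `g n` lies
within graph distance `m = 2(n - t) + 8δ ≤ 2K + 2 + 8δ` of `f n`, and bounded degree leaves at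
most `(D + 1)^m` candidates for it. Boundary points reached by rays through a common vertex of level
`n` have Gromov product at least `n`, hence distance at most `c₂ e^{-an} < r / 2`: one such point
for every candidate vertex gives the cover.
-/

namespace SimpleGraph

variable {V : Type*} {G : SimpleGraph V}

lemma Connected.exists_adj_dist_add_one (hG : G.Connected) {x y : V} (h : 0 < G.dist x y) :
    ∃ z, G.Adj z y ∧ G.dist x z + 1 = G.dist x y := by
  obtain ⟨w, hw⟩ := hG.exists_walk_length_eq_dist x y
  have hw_nil : ¬ w.Nil := fun hnil => by rw [← hw, hnil.length_eq_zero] at h; exact h.false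
  refine ⟨w.penultimate, w.adj_penultimate hw_nil, le_antisymm ?_ ?_⟩
  · have := dist_le w.dropLast
    rw [Walk.length_dropLast] at this
    omega
  · have := hG.dist_triangle (u := x) (v := w.penultimate) (w := y)
    rwa [dist_eq_one_iff_adj.2 (w.adj_penultimate hw_nil)] at this

lemma Connected.exists_finset_card_le_pow (hG : G.Connected) {D : ℕ}
    (hfin : ∀ x, {y | G.Adj x y}.Finite) (hD : ∀ x, {y | G.Adj x y}.ncard ≤ D) (x₀ : V) :
    ∀ m : ℕ, ∃ s : Finset V, (∀ y, G.dist x₀ y ≤ m → y ∈ s) ∧ s.card ≤ (D + 1) ^ m := by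
  classical
  intro m
  induction m with
  | zero =>
    refine ⟨{x₀}, fun y hy => ?_, by simp⟩
    rw [Finset.mem_singleton, ← hG.dist_eq_zero_iff.1 (Nat.le_zero.1 hy)]
  | succ m ih =>
    obtain ⟨s, hs, hcard⟩ := ih
    refine ⟨s.biUnion fun z => insert z (hfin z).toFinset, fun y hy => ?_, ?_⟩
    · rcases Nat.lt_or_ge m (G.dist x₀ y) with hm | hm
      · obtain ⟨z, hzy, hz⟩ := hG.exists_adj_dist_add_one (x := x₀) (y := y) (by omega)
        exact Finset.mem_biUnion.2 ⟨z, hs z (by omega), by simpa using Or.inr hzy⟩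
      · exact Finset.mem_biUnion.2 ⟨y, hs y hm, Finset.mem_insert_self _ _⟩
    · calc (s.biUnion fun z => insert z (hfin z).toFinset).card
          ≤ ∑ z ∈ s, (insert z (hfin z).toFinset).card := Finset.card_biUnion_le
        _ ≤ ∑ _z ∈ s, (D + 1) := Finset.sum_le_sum fun z _ =>
          (Finset.card_insert_le _ _).trans
            (by rw [← Set.ncard_eq_toFinset_card _ (hfin z)]; exact Nat.succ_le_succ (hD z))
        _ = s.card * (D + 1) := by rw [Finset.sum_const, smul_eq_mul]
        _ ≤ (D + 1) ^ (m + 1) := by rw [pow_succ]; exact Nat.mul_le_mul_right _ hcard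

end SimpleGraph

lemma two_mul_mul_exp_neg_lt {a c₁ c₂ K t x : ℝ} (ha : 0 < a) (hc₂ : 0 < c₂)
    (hK : 2 * c₂ ≤ c₁ * Real.exp (a * K)) (hx : t + K < x) :
    2 * (c₂ * Real.exp (-a * x)) < c₁ * Real.exp (-a * t) := by
  calc 2 * (c₂ * Real.exp (-a * x)) < 2 * c₂ * Real.exp (-a * (t + K)) := by
        rw [← mul_assoc]
        exact mul_lt_mul_of_pos_left (Real.exp_lt_exp.2 (by nlinarith)) (by positivity)
    _ ≤ c₁ * Real.exp (a * K) * Real.exp (-a * (t + K)) :=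
        mul_le_mul_of_nonneg_right hK (Real.exp_pos _).le
    _ = c₁ * Real.exp (-a * t) := by
        rw [mul_assoc, ← Real.exp_add]
        ring_nf

lemma exists_nonneg_two_mul_le_mul_exp {a c₁ c₂ : ℝ} (ha : 0 < a) (hc₁ : 0 < c₁) (hc₂ : 0 ≤ c₂) :
    ∃ K, 0 ≤ K ∧ 2 * c₂ ≤ c₁ * Real.exp (a * K) := by
  refine ⟨2 * c₂ / (a * c₁), by positivity, ?_⟩
  have haK : c₁ * (a * (2 * c₂ / (a * c₁))) = 2 * c₂ := by field_simp
  nlinarith [Real.add_one_le_exp (a * (2 * c₂ / (a * c₁)))]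

lemma exists_mul_exp_neg_mul_eq {a c r : ℝ} (ha : 0 < a) (hc : 0 < c) (hr : 0 < r) :
    ∃ t, c * Real.exp (-a * t) = r := by
  refine ⟨Real.log (c / r) / a, ?_⟩
  rw [show -a * (Real.log (c / r) / a) = -Real.log (c / r) by field_simp, Real.exp_neg,
    Real.exp_log (by positivity)]
  field_simp

namespace RootedGraph

variable {X : Type*} {R : RootedGraph X} {δ : ℝ}

def IsHyperbolicWith (R : RootedGraph X) (δ : ℝ) : Prop :=
  ∀ x y z : X, min (R.gp x z) (R.gp z y) - δ ≤ R.gp x y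

lemma level_le_level_add_dist (x y : X) : R.level y ≤ R.level x + R.G.dist x y :=
  R.conn.dist_triangle

lemma level_eq_zero_iff {x : X} : R.level x = 0 ↔ x = R.root := by
  rw [level, R.conn.dist_eq_zero_iff, eq_comm]

lemma gp_comm (x y : X) : R.gp x y = R.gp y x := by
  rw [gp, gp, SimpleGraph.dist_comm, add_comm (R.level x : ℝ)]

lemma gp_self (x : X) : R.gp x x = R.level x := by
  rw [gp, SimpleGraph.dist_self]
  ring

lemma dist_eq_sub_gp (x y : X) : (R.G.dist x y : ℝ) = R.level x + R.level y - 2 * R.gp x y := by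
  rw [gp]
  ring

lemma gp_nonneg (x y : X) : 0 ≤ R.gp x y := by
  have h : R.G.dist x y ≤ R.level x + R.level y := by
    have := R.conn.dist_triangle (u := x) (v := R.root) (w := y)
    rwa [SimpleGraph.dist_comm (u := x) (v := R.root)] at this
  rw [gp]
  have : (R.G.dist x y : ℝ) ≤ R.level x + R.level y := by exact_mod_cast h
  linarith

lemma gp_le_level_right (x y : X) : R.gp x y ≤ R.level y := by
  have h := level_le_level_add_dist (R := R) y x
  rw [SimpleGraph.dist_comm] at h
  rw [gp]
  have : (R.level x : ℝ) ≤ R.level y + R.G.dist x y := by exact_mod_cast h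
  linarith

lemma IsHyperbolicWith.nonneg (hδ : R.IsHyperbolicWith δ) : 0 ≤ δ := by
  simpa using hδ R.root R.root R.root

lemma IsHyperbolicWith.min_sub_le_gp (hδ : R.IsHyperbolicWith δ) (x y z w : X) :
    min (min (R.gp x y) (R.gp y z)) (R.gp z w) - 2 * δ ≤ R.gp x w := by
  have hxz := hδ x z y
  have hxw := hδ x w z
  have := hδ.nonneg
  have : min (min (R.gp x y) (R.gp y z)) (R.gp z w) - δ ≤ min (R.gp x z) (R.gp z w) :=
    le_min (by linarith [min_le_left (min (R.gp x y) (R.gp y z)) (R.gp z w)])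
      (by linarith [min_le_right (min (R.gp x y) (R.gp y z)) (R.gp z w)])
  linarith

namespace IsRay

variable {f : ℕ → X}

lemma level_eq (hf : R.IsRay f) (i : ℕ) : R.level (f i) = i := by
  induction i with
  | zero => rw [hf.1, level_eq_zero_iff]
  | succ i ih => rw [(hf.2 i).1, ih]

lemma dist_eq (hf : R.IsRay f) {i j : ℕ} (hij : i ≤ j) : R.G.dist (f i) (f j) = j - i := by
  refine le_antisymm ?_ ?_
  · induction j, hij using Nat.le_induction with
    | base => simp
    | succ j hij ih =>
      have := R.conn.dist_triangle (u := f i) (v := f j) (w := f (j + 1))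
      have := (hf.2 j).2
      omega
  · have := level_le_level_add_dist (R := R) (f i) (f j)
    rw [hf.level_eq, hf.level_eq] at this
    omega

lemma gp_eq (hf : R.IsRay f) (i j : ℕ) : R.gp (f i) (f j) = min (i : ℝ) j := by
  wlog hij : i ≤ j generalizing i j
  · rw [gp_comm, this j i (by omega), min_comm]
  rw [gp, hf.dist_eq hij, hf.level_eq, hf.level_eq, Nat.cast_sub hij,
    min_eq_left (by exact_mod_cast hij)]
  ring

end IsRay

lemma le_gpRay (f g : ℕ → X) (i : ℕ) : ENNReal.ofReal (R.gp (f i) (g i)) ≤ R.gpRay f g :=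
  le_iSup (fun i => ENNReal.ofReal (R.gp (f i) (g i))) i

lemma gpRay_eq_top_iff {f g : ℕ → X} : R.gpRay f g = ⊤ ↔ ∀ s : ℝ, ∃ i, s ≤ R.gp (f i) (g i) := by
  refine ⟨fun h s => ?_, fun h => ?_⟩
  · by_contra! hs
    have : R.gpRay f g ≤ ENNReal.ofReal s := iSup_le fun i => ENNReal.ofReal_le_ofReal (hs i).le
    exact ENNReal.ofReal_ne_top (top_le_iff.1 (h ▸ this))
  · by_contra hne
    obtain ⟨i, hi⟩ := h ((R.gpRay f g).toReal + 1)
    have := (ENNReal.ofReal_le_iff_le_toReal hne).1 (le_gpRay f g i)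
    linarith

lemma IsHyperbolicWith.min_sub_le_gp_of_le_gp (hδ : R.IsHyperbolicWith δ) {f g : ℕ → X}
    (hf : R.IsRay f) (hg : R.IsRay g) {t : ℝ} {i : ℕ}
    (ht : t ≤ R.gp (f i) (g i)) (n : ℕ) : min t n - 2 * δ ≤ R.gp (f n) (g n) := by
  have hti : t ≤ i := (hg.level_eq i ▸ ht.trans (gp_le_level_right _ _))
  have := hδ.min_sub_le_gp (f n) (f i) (g i) (g n)
  rw [hf.gp_eq, hg.gp_eq] at this
  have : min t n ≤ min (min (min (n : ℝ) i) (R.gp (f i) (g i))) (min (i : ℝ) n) := by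
    refine le_min (le_min (le_min (min_le_right _ _) ?_) (min_le_left _ _ |>.trans ht)) ?_
    · exact (min_le_left _ _).trans hti
    · exact min_le_min_right _ hti
  linarith

lemma IsHyperbolicWith.sub_le_gp_of_gpRay_eq_top (hδ : R.IsHyperbolicWith δ)
    {f g : ℕ → X} (hf : R.IsRay f) (hg : R.IsRay g) (hfg : R.gpRay f g = ⊤) (n : ℕ) :
    n - 2 * δ ≤ R.gp (f n) (g n) := by
  obtain ⟨i, hi⟩ := gpRay_eq_top_iff.1 hfg n
  simpa using hδ.min_sub_le_gp_of_le_gp hf hg hi n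

lemma IsHyperbolicWith.min_sub_le_gp_of_gpRay_eq_top (hδ : R.IsHyperbolicWith δ)
    {f f' g g' : ℕ → X} (hf : R.IsRay f) (hf' : R.IsRay f') (hg : R.IsRay g) (hg' : R.IsRay g')
    (hff' : R.gpRay f f' = ⊤) (hg'g : R.gpRay g' g = ⊤) {t : ℝ} {i : ℕ}
    (ht : t ≤ R.gp (f' i) (g' i)) (n : ℕ) : min t n - 4 * δ ≤ R.gp (f n) (g n) := by
  have hf'g' := hδ.min_sub_le_gp_of_le_gp hf' hg' ht n
  have hff'n := hδ.sub_le_gp_of_gpRay_eq_top hf hf' hff' n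
  have hg'gn := hδ.sub_le_gp_of_gpRay_eq_top hg' hg hg'g n
  have := hδ.min_sub_le_gp (f n) (f' n) (g' n) (g n)
  have htn := min_le_right t (n : ℝ)
  have : min t n - 2 * δ ≤ min (min (R.gp (f n) (f' n)) (R.gp (f' n) (g' n))) (R.gp (g' n) (g n)) :=
    le_min (le_min (by linarith) hf'g') (by linarith)
  linarith

lemma exists_mem_J_one_of_level_pos {y : X} (hy : 0 < R.level y) : ∃ z, y ∈ R.J 1 z := by
  obtain ⟨z, hzy, hz⟩ := R.conn.exists_adj_dist_add_one hy
  exact ⟨z, hz.symm, SimpleGraph.dist_eq_one_iff_adj.2 hzy⟩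

lemma exists_geodesic_to (y : X) : ∃ p : ℕ → X,
    p 0 = R.root ∧ (∀ i < R.level y, p (i + 1) ∈ R.J 1 (p i)) ∧ p (R.level y) = y := by
  induction hn : R.level y generalizing y with
  | zero => exact ⟨fun _ => y, level_eq_zero_iff.1 hn, by simp, rfl⟩
  | succ n ih =>
    obtain ⟨z, hyz⟩ := exists_mem_J_one_of_level_pos (R := R) (y := y) (by omega)
    obtain ⟨p, hp0, hp, hpz⟩ := ih z (by have := hyz.1; omega)
    refine ⟨Function.update p (n + 1) y, by simpa using hp0, fun i hi => ?_, by simp⟩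
    rcases Nat.lt_or_eq_of_le (Nat.le_of_lt_succ hi) with hin | rfl
    · simpa [Function.update_of_ne (by omega : i + 1 ≠ n + 1),
        Function.update_of_ne (by omega : i ≠ n + 1)] using hp i hin
    · simpa [hpz] using hyz

lemma exists_isRay_through (hne : ∀ x : X, (R.J 1 x).Nonempty) (y : X) :
    ∃ f, R.IsRay f ∧ f (R.level y) = y := by
  choose c hc using hne
  obtain ⟨p, hp0, hp, hpy⟩ := exists_geodesic_to (R := R) y
  set n := R.level y
  let f : ℕ → X := fun i => if i ≤ n then p i else c^[i - n] y
  have hf : ∀ i ≥ n, f i = c^[i - n] y := by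
    intro i hi
    rcases hi.eq_or_lt with rfl | hi
    · simp [f, hpy]
    · simp [f, Nat.not_le.2 hi]
  refine ⟨f, ⟨by simp [f, hp0], fun i => ?_⟩, by simp [f, hpy]⟩
  rcases Nat.lt_or_ge i n with hin | hin
  · simpa [f, hin.le, Nat.succ_le_of_lt hin] using hp i hin
  · rw [hf i hin, hf (i + 1) (by omega), Nat.sub_add_comm hin, Function.iterate_succ_apply']
    exact hc _

section Boundary

variable {B : Type*} {lim : (ℕ → X) → B}

lemma gpRay_le_gpB {f g : ℕ → X} (hf : R.IsRay f) (hg : R.IsRay g) :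
    R.gpRay f g ≤ R.gpB lim (lim f) (lim g) :=
  le_iSup₂_of_le f g <| le_iSup_of_le ⟨hf, hg, rfl, rfl⟩ le_rfl

lemma exists_lt_gpRay_of_lt_gpB {ξ η : B} {c : ℝ≥0∞} (h : c < R.gpB lim ξ η) :
    ∃ f g, R.IsRay f ∧ R.IsRay g ∧ lim f = ξ ∧ lim g = η ∧ c < R.gpRay f g := by
  simp only [gpB, lt_iSup_iff] at h
  obtain ⟨f, g, ⟨hf, hg, hfξ, hgη⟩, hc⟩ := h
  exact ⟨f, g, hf, hg, hfξ, hgη, hc⟩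

lemma ofReal_le_gpB_of_apply_eq {f g : ℕ → X} (hf : R.IsRay f) (hg : R.IsRay g) {n : ℕ}
    (hfg : f n = g n) : ENNReal.ofReal n ≤ R.gpB lim (lim f) (lim g) := by
  refine le_trans ?_ ((le_gpRay f g n).trans (gpRay_le_gpB hf hg))
  rw [hfg, gp_self, hg.level_eq]

lemma BoundaryOf.min_sub_le_gp_of_ofReal_lt_gpB (hB : R.BoundaryOf lim)
    (hδ : R.IsHyperbolicWith δ) {f g : ℕ → X} (hf : R.IsRay f) (hg : R.IsRay g) {t : ℝ}
    (h : ENNReal.ofReal t < R.gpB lim (lim f) (lim g)) (n : ℕ) :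
    min t n - 4 * δ ≤ R.gp (f n) (g n) := by
  obtain ⟨f', g', hf', hg', hff', hgg', hlt⟩ := exists_lt_gpRay_of_lt_gpB h
  obtain ⟨i, hi⟩ := lt_iSup_iff.1 hlt
  refine hδ.min_sub_le_gp_of_gpRay_eq_top hf hf' hg hg' ((hB.2 f f' hf hf').1 hff'.symm)
    ((hB.2 g' g hg' hg).1 hgg') (ENNReal.ofReal_lt_ofReal_iff'.1 hi).1.le n

lemma BoundaryOf.eq_of_gpB_eq_top (hB : R.BoundaryOf lim) (hδ : R.IsHyperbolicWith δ)
    {ξ η : B} (h : R.gpB lim ξ η = ⊤) : ξ = η := by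
  obtain ⟨f, hf, rfl⟩ := hB.1 ξ
  obtain ⟨g, hg, rfl⟩ := hB.1 η
  refine (hB.2 f g hf hg).2 (gpRay_eq_top_iff.2 fun s => ⟨⌈s + 4 * δ⌉₊, ?_⟩)
  have := hB.min_sub_le_gp_of_ofReal_lt_gpB hδ hf hg (t := s + 4 * δ) (h ▸ ENNReal.ofReal_lt_top)
    ⌈s + 4 * δ⌉₊
  rw [min_eq_left (Nat.le_ceil _)] at this
  linarith

end Boundary

section GromovMetric

variable {B : Type*} [MetricSpace B] {lim : (ℕ → X) → B} {a c₁ c₂ : ℝ}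

lemma GromovLike.dist_le_of_ofReal_le_gpB (hθ : R.GromovLike lim a c₁ c₂)
    (hB : R.BoundaryOf lim) (hδ : R.IsHyperbolicWith δ) (ha : 0 ≤ a) (hc₂ : 0 ≤ c₂)
    {ξ η : B} {s : ℝ} (h : ENNReal.ofReal s ≤ R.gpB lim ξ η) :
    dist ξ η ≤ c₂ * Real.exp (-a * s) := by
  by_cases hξη : ξ = η
  · rw [hξη, _root_.dist_self]
    positivity
  have hfin : R.gpB lim ξ η ≠ ⊤ := fun htop => hξη (hB.eq_of_gpB_eq_top hδ htop)
  have hs : s ≤ (R.gpB lim ξ η).toReal := (ENNReal.ofReal_le_iff_le_toReal hfin).1 h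
  calc dist ξ η ≤ c₂ * Real.exp (-a * (R.gpB lim ξ η).toReal) := (hθ ξ η hξη).2
    _ ≤ c₂ * Real.exp (-a * s) :=
      mul_le_mul_of_nonneg_left (Real.exp_le_exp.2 (by nlinarith)) hc₂

lemma GromovLike.dist_lim_le_of_apply_eq (hθ : R.GromovLike lim a c₁ c₂)
    (hB : R.BoundaryOf lim) (hδ : R.IsHyperbolicWith δ) (ha : 0 ≤ a) (hc₂ : 0 ≤ c₂)
    {f g : ℕ → X} (hf : R.IsRay f) (hg : R.IsRay g) {n : ℕ} (hfg : f n = g n) :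
    dist (lim f) (lim g) ≤ c₂ * Real.exp (-a * n) :=
  hθ.dist_le_of_ofReal_le_gpB hB hδ ha hc₂ (ofReal_le_gpB_of_apply_eq hf hg hfg)

lemma GromovLike.dist_le (hθ : R.GromovLike lim a c₁ c₂) (hB : R.BoundaryOf lim)
    (hδ : R.IsHyperbolicWith δ) (ha : 0 ≤ a) (hc₂ : 0 ≤ c₂) (ξ η : B) : dist ξ η ≤ c₂ := by
  obtain ⟨f, hf, rfl⟩ := hB.1 ξ
  obtain ⟨g, hg, rfl⟩ := hB.1 η
  simpa using hθ.dist_lim_le_of_apply_eq hB hδ ha hc₂ hf hg (n := 0) (hf.1.trans hg.1.symm)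

lemma GromovLike.min_sub_le_gp_of_dist_lt (hθ : R.GromovLike lim a c₁ c₂)
    (hB : R.BoundaryOf lim) (hδ : R.IsHyperbolicWith δ) (ha : 0 < a) (hc₁ : 0 < c₁)
    {f g : ℕ → X} (hf : R.IsRay f) (hg : R.IsRay g) {t : ℝ}
    (h : dist (lim f) (lim g) < c₁ * Real.exp (-a * t)) (n : ℕ) :
    min t n - 4 * δ ≤ R.gp (f n) (g n) := by
  have hδ0 := hδ.nonneg
  by_cases hfg : lim f = lim g
  · have := hδ.sub_le_gp_of_gpRay_eq_top hf hg ((hB.2 f g hf hg).1 hfg) n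
    linarith [min_le_right t n]
  rcases lt_or_ge t 0 with ht | ht
  · linarith [min_le_left t n, gp_nonneg (R := R) (f n) (g n)]
  have hτ : t < (R.gpB lim (lim f) (lim g)).toReal := by
    have := (hθ _ _ hfg).1.trans_lt h
    have := Real.exp_lt_exp.1 (lt_of_mul_lt_mul_left this hc₁.le)
    nlinarith
  have hfin : R.gpB lim (lim f) (lim g) ≠ ⊤ := fun htop => by
    rw [htop, ENNReal.toReal_top] at hτ
    linarith
  exact hB.min_sub_le_gp_of_ofReal_lt_gpB hδ hf hg
    ((ENNReal.ofReal_lt_iff_lt_toReal ht hfin).2 hτ) n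

lemma GromovLike.exists_finset_ball_subset_closedBall (hθ : R.GromovLike lim a c₁ c₂)
    (hB : R.BoundaryOf lim) (hδ : R.IsHyperbolicWith δ) (hne : ∀ x : X, (R.J 1 x).Nonempty)
    {D : ℕ} (hD : ∀ x : X, {y | R.G.Adj x y}.ncard ≤ D) (ha : 0 < a) (hc₁ : 0 < c₁)
    (hc₂ : 0 ≤ c₂) (ξ : B) {t : ℝ} {n : ℕ} (htn : t ≤ n) :
    ∃ s : Finset B, s.card ≤ (D + 1) ^ ⌈2 * (n - t) + 8 * δ⌉₊ ∧
      ball ξ (c₁ * Real.exp (-a * t)) ⊆ ⋃ η ∈ s, closedBall η (c₂ * Real.exp (-a * n)) := by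
  classical
  choose ρ hρ hρy using exists_isRay_through hne
  obtain ⟨f, hf, rfl⟩ := hB.1 ξ
  obtain ⟨S, hS, hcard⟩ := R.conn.exists_finset_card_le_pow R.locFin hD (f n) ⌈2 * (n - t) + 8 * δ⌉₊
  refine ⟨S.image (lim ∘ ρ), Finset.card_image_le.trans hcard, fun η hη => ?_⟩
  obtain ⟨g, hg, rfl⟩ := hB.1 η
  have hgp := hθ.min_sub_le_gp_of_dist_lt hB hδ ha hc₁ hf hg (mem_ball'.1 hη) n
  have hdist : (R.G.dist (f n) (g n) : ℝ) ≤ 2 * (n - t) + 8 * δ := by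
    rw [dist_eq_sub_gp, hf.level_eq, hg.level_eq]
    rw [min_eq_left htn] at hgp
    linarith
  have hgS : g n ∈ S := hS _ (by exact_mod_cast hdist.trans (Nat.le_ceil _))
  have hρg : ρ (g n) n = g n := by simpa [hg.level_eq] using hρy (g n)
  refine Set.mem_iUnion₂.2 ⟨lim (ρ (g n)), Finset.mem_image_of_mem _ hgS, ?_⟩
  exact mem_closedBall.2 (hθ.dist_lim_le_of_apply_eq hB hδ ha.le hc₂ hg (hρ _) hρg.symm)

lemma GromovLike.exists_finset_ball_subset_ball_half (hθ : R.GromovLike lim a c₁ c₂)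
    (hB : R.BoundaryOf lim) (hδ : R.IsHyperbolicWith δ) (hne : ∀ x : X, (R.J 1 x).Nonempty)
    {D : ℕ} (hD : ∀ x : X, {y | R.G.Adj x y}.ncard ≤ D) (ha : 0 < a) (hc₁ : 0 < c₁)
    (hc₂ : 0 < c₂) {K : ℝ} (hK0 : 0 ≤ K) (hK : 2 * c₂ ≤ c₁ * Real.exp (a * K)) (ξ : B) (t : ℝ) :
    ∃ s : Finset B, s.card ≤ (D + 1) ^ ⌈2 * (K + 1) + 8 * δ⌉₊ ∧
      ball ξ (c₁ * Real.exp (-a * t)) ⊆ ⋃ η ∈ s, ball η (c₁ * Real.exp (-a * t) / 2) := by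
  rcases lt_or_ge (t + K) 0 with hsmall | hbig
  · refine ⟨{ξ}, Nat.one_le_pow _ _ (by omega), fun η _ => ?_⟩
    have := two_mul_mul_exp_neg_lt ha hc₂ hK hsmall
    rw [mul_zero, Real.exp_zero, mul_one] at this
    refine Set.mem_iUnion₂.2 ⟨ξ, Finset.mem_singleton_self ξ, mem_ball.2 ?_⟩
    linarith [hθ.dist_le hB hδ ha.le hc₂.le η ξ]
  set n := ⌊t + K⌋₊ + 1
  have hn : t + K < n := by simpa [n] using Nat.lt_floor_add_one (t + K)
  have hn' : (n : ℝ) ≤ t + K + 1 := by simpa [n] using Nat.floor_le hbig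
  obtain ⟨s, hs, hcover⟩ := hθ.exists_finset_ball_subset_closedBall hB hδ hne hD ha hc₁ hc₂.le ξ
    (t := t) (n := n) (by linarith)
  refine ⟨s, hs.trans (Nat.pow_le_pow_right (by omega) (Nat.ceil_mono (by linarith))),
    hcover.trans (Set.iUnion₂_mono fun η _ => closedBall_subset_ball ?_)⟩
  linarith [two_mul_mul_exp_neg_lt ha hc₂ hK hn]

end GromovMetric

end RootedGraph

theorem boundary_doubling_general {X B : Type*} [MetricSpace B] (R : RootedGraph X)
    (hhyp : R.Hyperbolic) (hbdd : R.BddDeg)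
    (hne : ∀ x : X, (R.J 1 x).Nonempty)
    (lim : (ℕ → X) → B) (hB : R.BoundaryOf lim)
    (a c₁ c₂ : ℝ) (ha : 0 < a) (hc₁ : 0 < c₁) (hc₂ : 0 < c₂)
    (hθ : R.GromovLike lim a c₁ c₂) :
    ∃ ℓ : ℕ, ∀ (ξ : B) (r : ℝ), ∃ s : Finset B,
      s.card ≤ ℓ ∧ Metric.ball ξ r ⊆ ⋃ η ∈ s, Metric.ball η (r / 2) := by
  obtain ⟨δ, -, hδ⟩ := hhyp
  obtain ⟨D, hD⟩ := hbdd
  obtain ⟨K, hK0, hK⟩ := exists_nonneg_two_mul_le_mul_exp ha hc₁ hc₂.le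
  refine ⟨(D + 1) ^ ⌈2 * (K + 1) + 8 * δ⌉₊, fun ξ r => ?_⟩
  rcases le_or_gt r 0 with hr | hr
  · exact ⟨∅, by simp, by simp [ball_eq_empty.2 hr]⟩
  obtain ⟨t, rfl⟩ := exists_mul_exp_neg_mul_eq ha hc₁ hr
  exact hθ.exists_finset_ball_subset_ball_half hB hδ hne hD ha hc₁ hc₂ hK0 hK ξ t

/-- Theorem 3.6: the hyperbolic boundary of an expansive hyperbolic graph
of bounded degree is a doubling metric space. -/
theorem boundary_doubling {X B : Type*} [MetricSpace B] (R : RootedGraph X)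
    (hexp : R.Expansive) (hhyp : R.Hyperbolic) (hbdd : R.BddDeg)
    (hne : ∀ x : X, (R.J 1 x).Nonempty)
    (lim : (ℕ → X) → B) (hB : R.BoundaryOf lim)
    (a c₁ c₂ : ℝ) (ha : 0 < a) (hc₁ : 0 < c₁) (hc₂ : 0 < c₂)
    (hθ : R.GromovLike lim a c₁ c₂) :
    ∃ ℓ : ℕ, ∀ (ξ : B) (r : ℝ), ∃ s : Finset B,
      s.card ≤ ℓ ∧ Metric.ball ξ r ⊆ ⋃ η ∈ s, Metric.ball η (r / 2) :=
  boundary_doubling_general R hhyp hbdd hne lim hB a c₁ c₂ ha hc₁ hc₂ hθ
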